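/- arXiv:1501.00327 — 2 statements merged into one kernel-verified Lean document; each statement's English description precedes it below -/
import Mathlib

section
/- Let r ≥ 6 be even and let M_{r+1} be the binary extension of the rank-(r+1) wheel by γ as above, with spokes x_0,…,x_r in cyclic order and rim triangles {x_i,y_i,x_{i+1}}. Then the set C = {x_0, x_1, …, x_{r−2}, y_{r−1}, γ} is a circuit of M_{r+1}. -/
open Set Matroid
open scoped Classical

/-- `M` is the binary matroid on ground set `E` represented by the vectors `v`. -/
def IsBinRepOn {α W : Type*} [AddCommGroup W] [Module (ZMod 2) W]
    (M : Matroid α) (E : Set α) (v : α → W) : Prop :=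
  M.E = E ∧ ∀ I ⊆ E, (M.Indep I ↔ LinearIndependent (ZMod 2) (fun x : I => v x))

/-- Isomorphism of matroids: a bijection of ground sets preserving independence. -/
def MatroidIso {α β : Type*} (M : Matroid α) (N : Matroid β) : Prop :=
  ∃ e : M.E ≃ N.E, ∀ I : Set M.E,
    (M.Indep (Subtype.val '' I) ↔ N.Indep (Subtype.val '' (e '' I)))

/-- The incidence vector of an edge, over GF(2). -/
noncomputable def incVec {V : Type*} (e : Sym2 V) : V → ZMod 2 :=
  fun v => if v ∈ e then 1 else 0

/-- `M` is the cycle matroid of the graph `G`, i.e. the binary matroid on the edge set of `G`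
represented by the GF(2) incidence vectors of the edges. -/
def IsCycleMatroidOf {V : Type*} (M : Matroid (Sym2 V)) (G : SimpleGraph V) : Prop :=
  IsBinRepOn M G.edgeSet incVec

/-- Deletion of a set of elements from a matroid. -/
def mDel {α : Type*} (M : Matroid α) (D : Set α) : Matroid α := M ↾ (M.E \ D)

/-- Contraction of a set of elements in a matroid. -/
def mCon {α : Type*} (M : Matroid α) (C : Set α) : Matroid α := (mDel M✶ C)✶

/-- A circuit of a matroid: a minimal dependent set. -/
def mCircuit {α : Type*} (M : Matroid α) (C : Set α) : Prop :=
  C ⊆ M.E ∧ ¬ M.Indep C ∧ ∀ x ∈ C, M.Indep (C \ {x})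

/-- A cocircuit of a matroid: a circuit of the dual. -/
def mCocircuit {α : Type*} (M : Matroid α) (C : Set α) : Prop := mCircuit M✶ C

/-- The rank of a set in a matroid: the supremum of cardinalities of independent subsets. -/
noncomputable def mRk {α : Type*} (M : Matroid α) (X : Set α) : ℕ :=
  sSup (Set.ncard '' {I | I ⊆ X ∧ M.Indep I})

/-- A `k`-separation of a matroid. -/
def mKSep {α : Type*} (M : Matroid α) (k : ℕ) (X Y : Set α) : Prop :=
  Disjoint X Y ∧ X ∪ Y = M.E ∧ k ≤ X.ncard ∧ k ≤ Y.ncard ∧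
    mRk M X + mRk M Y + 1 ≤ mRk M M.E + k

/-- A matroid is `3`-connected if it has no 1- or 2-separations. -/
def mThreeConnected {α : Type*} (M : Matroid α) : Prop :=
  (∀ X Y, ¬ mKSep M 1 X Y) ∧ (∀ X Y, ¬ mKSep M 2 X Y)

/-- A matroid is internally 4-connected if it is 3-connected and
every 3-separation has a side of size exactly 3. -/
def mInternally4 {α : Type*} (M : Matroid α) : Prop :=
  mThreeConnected M ∧ ∀ X Y, mKSep M 3 X Y → min X.ncard Y.ncard = 3

/-- A matroid is binary if it is representable over GF(2). -/
def mBinary {α : Type*} (M : Matroid α) : Prop :=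
  ∃ (n : ℕ) (v : α → (Fin n → ZMod 2)), IsBinRepOn M M.E v

/-- `M` is the uniform matroid of rank `r` on all of `α`. -/
def mUniformOf {α : Type*} (M : Matroid α) (r : ℕ) : Prop :=
  M.E = univ ∧ ∀ I : Set α, (M.Indep I ↔ I.ncard ≤ r)

/-- The points of the binary projective space of rank 4, `PG(3,2)`. -/
abbrev PGpt (n : ℕ) := {v : Fin n → ZMod 2 // v ≠ 0}

/-- The quartic Möbius ladder on `2n+1` vertices. -/
def qml (n : ℕ) : SimpleGraph (ZMod (2 * n + 1)) :=
  SimpleGraph.circulantGraph {1, (n : ZMod (2 * n + 1))}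

/-- The cubic Möbius ladder on `2n` vertices. -/
def cml (n : ℕ) : SimpleGraph (ZMod (2 * n)) :=
  SimpleGraph.circulantGraph {1, (n : ZMod (2 * n))}
/-- The spoke `x_i` of `M_{r+1}`. -/
def xe (r : ℕ) (i : ZMod (r + 1)) : ZMod (r + 1) ⊕ (ZMod (r + 1) ⊕ Unit) := Sum.inl i

/-- The rim element `y_i` of `M_{r+1}`, lying in the triangle `{x_i, y_i, x_{i+1}}`. -/
def ye (r : ℕ) (i : ZMod (r + 1)) : ZMod (r + 1) ⊕ (ZMod (r + 1) ⊕ Unit) :=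
  Sum.inr (Sum.inl i)

/-- The extension element γ of `M_{r+1}`. -/
def ge (r : ℕ) : ZMod (r + 1) ⊕ (ZMod (r + 1) ⊕ Unit) := Sum.inr (Sum.inr ())

/-- The binary representation of `M_{r+1}`: the wheel `W_{r+1}` has hub `none` and rim vertices
`some i`; the spoke `x_i` and rim edge `y_i` get their incidence vectors, and γ is represented
by the sum of the spoke vectors, so that its fundamental circuit with respect to the spoke
basis `B = {x_0, …, x_r}` is `B ∪ {γ}`. -/
noncomputable def mWVec (r : ℕ) :
    ZMod (r + 1) ⊕ (ZMod (r + 1) ⊕ Unit) → (Option (ZMod (r + 1)) → ZMod 2) :=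
  Sum.elim (fun i => incVec s((none : Option (ZMod (r + 1))), some i))
    (Sum.elim (fun i => incVec s((some i : Option (ZMod (r + 1))), some (i + 1)))
      (fun _ => ∑ i : ZMod (r + 1), incVec s((none : Option (ZMod (r + 1))), some i)))

/-!
`C` is the symmetric difference of the circuit `{x_0, …, x_r, γ}` and the triangle
`{x_{r-1}, y_{r-1}, x_r}`, so its vectors sum to zero over GF(2). It is a minimal such set: for
`k ≤ r - 2` the coordinate of rim vertex `k` is nonzero only on `x_k` and `γ` among the elements
of `C`, and that of rim vertex `r - 1` only on `y_{r-1}` and `γ`; hence a zero-sum subset of `C`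
containing any element contains `γ`, and then all of `C`.
-/

open Finset

lemma incVec_add_incVec_add_incVec {V : Type*} {a b c : V} (hab : a ≠ b) (hbc : b ≠ c)
    (hac : a ≠ c) : incVec s(a, b) + incVec s(b, c) + incVec s(a, c) = 0 := by
  funext w
  simp only [incVec, Sym2.mem_iff, Pi.add_apply, Pi.zero_apply]
  by_cases ha : w = a <;> by_cases hb : w = b <;> by_cases hc : w = c <;> simp_all <;> decide

lemma ZMod.natCast_inj_of_le {n a b : ℕ} (ha : a ≤ n) (hb : b ≤ n) :
    (a : ZMod (n + 1)) = b ↔ a = b := by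
  rw [ZMod.natCast_eq_natCast_iff', Nat.mod_eq_of_lt (by omega), Nat.mod_eq_of_lt (by omega)]

lemma ZMod.sum_eq_sum_range {M : Type*} [AddCommMonoid M] (n : ℕ) (f : ZMod (n + 1) → M) :
    ∑ i, f i = ∑ k ∈ range (n + 1), f k := by
  rw [← Fin.sum_univ_eq_sum_range]
  exact sum_congr rfl fun i _ => congrArg f (ZMod.natCast_zmod_val (n := n + 1) i).symm

section Binary

variable {α W : Type*} [AddCommGroup W] [Module (ZMod 2) W]

lemma sum_zmod_two_smul_eq_sum_filter {ι : Type*} (s : Finset ι) (f : ι → ZMod 2)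
    (v : ι → W) :
    ∑ i ∈ s, f i • v i = ∑ i ∈ s with f i ≠ 0, v i := by
  rw [← sum_filter_of_ne (p := fun i => f i ≠ 0) fun i _ h hf => h (by rw [hf, zero_smul])]
  exact sum_congr rfl fun i hi => by
    rw [show f i = 1 from Fin.eq_one_of_ne_zero (f i) (mem_filter.1 hi).2, one_smul]

-- Over GF(2) a linear dependency is just a subset with zero sum.
lemma mCircuit_of_sum_eq_zero {M : Matroid α} {E : Set α} {v : α → W}
    (hM : IsBinRepOn M E v) {C : Finset α} (hCE : ↑C ⊆ E) (hC : C.Nonempty)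
    (hsum : ∑ e ∈ C, v e = 0) (hmin : ∀ s ⊆ C, ∑ e ∈ s, v e = 0 → s = ∅ ∨ s = C) :
    mCircuit M C := by
  classical
  refine ⟨hM.1 ▸ hCE, ?_, fun x hx => ?_⟩
  · rw [hM.2 _ hCE]
    change ¬ LinearIndepOn (ZMod 2) v C
    obtain ⟨x, hx⟩ := hC
    exact not_linearIndepOn_finset_iff.2 ⟨1, by simpa using hsum, x, hx, one_ne_zero⟩
  · rw [← coe_erase, hM.2 _ ((coe_erase x C).symm ▸ sdiff_subset.trans hCE)]
    change LinearIndepOn (ZMod 2) v (C.erase x)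
    refine linearIndepOn_finset_iff.2 fun f hf i hi => ?_
    by_contra hfi
    rw [sum_zmod_two_smul_eq_sum_filter] at hf
    rcases hmin _ ((filter_subset _ _).trans (erase_subset x C)) hf with h | h
    · exact notMem_empty i (h ▸ mem_filter.2 ⟨hi, hfi⟩)
    · exact notMem_erase x C (mem_filter.1 (h.symm ▸ hx : x ∈ _)).1

end Binary

lemma mem_iff_mem_of_sum_eq_zero {α ι : Type*} [DecidableEq α] {v : α → ι → ZMod 2}
    {C s : Finset α} (hs : s ⊆ C) (hsum : ∑ e ∈ s, v e = 0) {c : ι} {a b : α}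
    (hc : ∀ e ∈ C, v e c = (if e = a then 1 else 0) + (if e = b then 1 else 0)) :
    a ∈ s ↔ b ∈ s := by
  have h := congrFun hsum c
  rw [Finset.sum_apply, sum_congr rfl fun e he => hc e (hs he), sum_add_distrib, sum_ite_eq',
    sum_ite_eq'] at h
  by_cases ha : a ∈ s <;> by_cases hb : b ∈ s <;> simp_all

variable {r : ℕ}

lemma mWVec_xe_apply_some (i j : ZMod (r + 1)) :
    mWVec r (xe r i) (some j) = if i = j then 1 else 0 := by
  simp [mWVec, xe, incVec, eq_comm]

lemma mWVec_ye_apply_some (i j : ZMod (r + 1)) :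
    mWVec r (ye r i) (some j) = if j = i ∨ j = i + 1 then 1 else 0 := by
  simp [mWVec, ye, incVec]

lemma mWVec_ge : mWVec r (ge r) = ∑ i, mWVec r (xe r i) := rfl

lemma mWVec_ge_apply_some (j : ZMod (r + 1)) : mWVec r (ge r) (some j) = 1 := by
  simp [mWVec_ge, mWVec_xe_apply_some]

lemma mWVec_xe_add_ye_add_xe_add_one (hr : r ≠ 0) (i : ZMod (r + 1)) :
    mWVec r (xe r i) + mWVec r (ye r i) + mWVec r (xe r (i + 1)) = 0 := by
  have : Fact (1 < r + 1) := ⟨by omega⟩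
  exact incVec_add_incVec_add_incVec (by simp) (by simp) (by simp)

def circuitC (r : ℕ) : Finset (ZMod (r + 1) ⊕ (ZMod (r + 1) ⊕ Unit)) :=
  insert (ye r ((r - 1 : ℕ) : ZMod (r + 1)))
    (insert (ge r) ((Finset.Iic (r - 2)).image fun k : ℕ => xe r k))

lemma sum_mWVec_circuitC (hr : 2 ≤ r) : ∑ e ∈ circuitC r, mWVec r e = 0 := by
  set S := ∑ k ∈ Finset.Iic (r - 2), mWVec r (xe r k)
  have hγ : mWVec r (ge r) = S + mWVec r (xe r (r - 1 : ℕ)) + mWVec r (xe r (r : ℕ)) := by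
    rw [mWVec_ge, ZMod.sum_eq_sum_range,
      show range (r + 1) = range (r - 2 + 1 + 1 + 1) by congr 1; omega, sum_range_succ,
      sum_range_succ, Nat.range_succ_eq_Iic, show r - 2 + 1 = r - 1 by omega,
      show r - 2 + 2 = r by omega]
  have htri := mWVec_xe_add_ye_add_xe_add_one (r := r) (by omega) ((r - 1 : ℕ) : ZMod (r + 1))
  rw [← Nat.cast_add_one, Nat.sub_one_add_one (by omega)] at htri
  have hinj : Set.InjOn (fun k : ℕ => xe r k) (Finset.Iic (r - 2)) := fun a ha b hb h =>
    (ZMod.natCast_inj_of_le (n := r) (by simp at ha; omega) (by simp at hb; omega)).1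
      (by simpa [xe] using h)
  rw [circuitC, sum_insert (by simp [xe, ye, ge]), sum_insert (by simp [xe, ge]), sum_image hinj]
  linear_combination hγ + htri + ZModModule.add_self S

lemma mem_circuitC {e : ZMod (r + 1) ⊕ (ZMod (r + 1) ⊕ Unit)} :
    e ∈ circuitC r ↔ (∃ k : ℕ, k ≤ r - 2 ∧ e = xe r k) ∨
      e = ye r ((r - 1 : ℕ) : ZMod (r + 1)) ∨ e = ge r := by
  simp only [circuitC, Finset.mem_insert, Finset.mem_image, Finset.mem_Iic]
  grind

lemma mWVec_apply_some_of_mem_circuitC (hr : 2 ≤ r) {e : ZMod (r + 1) ⊕ (ZMod (r + 1) ⊕ Unit)}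
    (he : e ∈ circuitC r) {k : ℕ} (hk : k ≤ r - 2) :
    mWVec r e (some k) = (if e = xe r k then 1 else 0) + (if e = ge r then 1 else 0) := by
  rcases mem_circuitC.1 he with ⟨m, hm, rfl⟩ | rfl | rfl
  · have h := ZMod.natCast_inj_of_le (n := r) (a := m) (b := k) (by omega) (by omega)
    rw [mWVec_xe_apply_some]
    simp [h, xe, ge]
  · have h₁ := ZMod.natCast_inj_of_le (n := r) (a := k) (b := r - 1) (by omega) (by omega)
    have h₂ := ZMod.natCast_inj_of_le (n := r) (a := k) (b := r) (by omega) le_rfl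
    rw [mWVec_ye_apply_some, ← Nat.cast_add_one, Nat.sub_one_add_one (by omega)]
    simp [h₁, h₂, xe, ye, ge]
    omega
  · rw [mWVec_ge_apply_some]
    simp [xe, ge]

lemma mWVec_apply_some_pred_of_mem_circuitC (hr : 2 ≤ r)
    {e : ZMod (r + 1) ⊕ (ZMod (r + 1) ⊕ Unit)} (he : e ∈ circuitC r) :
    mWVec r e (some ((r - 1 : ℕ) : ZMod (r + 1))) =
      (if e = ye r ((r - 1 : ℕ) : ZMod (r + 1)) then 1 else 0) + (if e = ge r then 1 else 0) := by
  rcases mem_circuitC.1 he with ⟨m, hm, rfl⟩ | rfl | rfl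
  · have h := ZMod.natCast_inj_of_le (n := r) (a := m) (b := r - 1) (by omega) (by omega)
    rw [mWVec_xe_apply_some]
    simp [h, xe, ye, ge]
    omega
  · rw [mWVec_ye_apply_some]
    simp [ye, ge]
  · rw [mWVec_ge_apply_some]
    simp [ye, ge]

lemma eq_empty_or_eq_circuitC (hr : 2 ≤ r) {s : Finset (ZMod (r + 1) ⊕ (ZMod (r + 1) ⊕ Unit))}
    (hs : s ⊆ circuitC r) (hsum : ∑ e ∈ s, mWVec r e = 0) : s = ∅ ∨ s = circuitC r := by
  have key : ∀ e ∈ circuitC r, e ∈ s ↔ ge r ∈ s := by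
    intro e he
    rcases mem_circuitC.1 he with ⟨k, hk, rfl⟩ | rfl | rfl
    · exact mem_iff_mem_of_sum_eq_zero hs hsum fun e he =>
        mWVec_apply_some_of_mem_circuitC hr he hk
    · exact mem_iff_mem_of_sum_eq_zero hs hsum fun e he =>
        mWVec_apply_some_pred_of_mem_circuitC hr he
    · rfl
  by_cases hγ : ge r ∈ s
  · exact .inr (Subset.antisymm hs fun e he => (key e he).2 hγ)
  · exact .inl (eq_empty_of_forall_notMem fun e he => hγ ((key e (hs he)).1 he))

theorem statement8_general (r : ℕ) (hr : 6 ≤ r)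
    (M : Matroid (ZMod (r + 1) ⊕ (ZMod (r + 1) ⊕ Unit)))
    (hM : IsBinRepOn M univ (mWVec r)) :
    mCircuit M ({e | ∃ k : ℕ, k ≤ r - 2 ∧ e = xe r ((k : ℕ) : ZMod (r + 1))} ∪
      {ye r (((r - 1 : ℕ) : ZMod (r + 1))), ge r}) := by
  have hC : {e | ∃ k : ℕ, k ≤ r - 2 ∧ e = xe r ((k : ℕ) : ZMod (r + 1))} ∪
      {ye r (((r - 1 : ℕ) : ZMod (r + 1))), ge r} = (circuitC r : Set _) := by
    ext e
    simp only [mem_coe, mem_circuitC]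
    rfl
  rw [hC]
  exact mCircuit_of_sum_eq_zero hM (Set.subset_univ _) (insert_nonempty _ _)
    (sum_mWVec_circuitC (by omega)) fun s hs => eq_empty_or_eq_circuitC (by omega) hs

/-- For even `r ≥ 6`, the set `C = {x_0, x_1, …, x_{r-2}, y_{r-1}, γ}` is a circuit
of `M_{r+1}`. -/
theorem statement8 (r : ℕ) (hr : 6 ≤ r) (hre : Even r)
    (M : Matroid (ZMod (r + 1) ⊕ (ZMod (r + 1) ⊕ Unit)))
    (hM : IsBinRepOn M univ (mWVec r)) :
    mCircuit M ({e | ∃ k : ℕ, k ≤ r - 2 ∧ e = xe r ((k : ℕ) : ZMod (r + 1))} ∪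
      {ye r (((r - 1 : ℕ) : ZMod (r + 1))), ge r}) :=
  statement8_general r hr M hM
end

section
/- Every internally 4-connected binary matroid with exactly 7 elements is isomorphic to the Fano matroid F_7 or its dual F_7*. -/
open Set Matroid
open scoped Classical

/-!
Three-connectivity of a binary matroid `M` on seven elements excludes loops, coloops, parallel
pairs and series pairs: every set of at most two elements is independent both in `M` and in `M✶`.
So `M` and `M✶` are each represented by seven distinct nonzero vectors over GF(2), and since a
space of dimension `d` has only `2 ^ d - 1` nonzero vectors, both ranks are at least 3. As
`r(M) + r(M✶) = 7`, one of `M`, `M✶` has rank 3; its seven vectors are then all the points of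
`PG(2, 2)`, so that matroid is the Fano plane.
-/

open Module Submodule

section LinearAlgebra

variable {K V ι : Type*} [Field K] [AddCommGroup V] [Module K V] {v : ι → V} {s t : Set ι}

lemma finrank_span_image_le_ncard (hs : s.Finite) : finrank K (span K (v '' s)) ≤ s.ncard := by
  have := hs.fintype
  rw [image_eq_range, ← Nat.card_coe_set_eq, Nat.card_eq_fintype_card]
  exact finrank_range_le_card _

lemma linearIndepOn_iff_finrank_span_eq_ncard (hs : s.Finite) :
    LinearIndepOn K v s ↔ finrank K (span K (v '' s)) = s.ncard := by
  have := hs.fintype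
  rw [image_eq_range, ← Nat.card_coe_set_eq, Nat.card_eq_fintype_card]
  exact linearIndependent_iff_card_eq_finrank_span.trans eq_comm

lemma ncard_le_card_pow_finrank_sub_one [Finite K] (hs : s.Finite) (hinj : InjOn v s)
    (h0 : ∀ x ∈ s, v x ≠ 0) : s.ncard ≤ Nat.card K ^ finrank K (span K (v '' s)) - 1 := by
  have : FiniteDimensional K (span K (v '' s)) := FiniteDimensional.span_of_finite K (hs.image v)
  have : Finite (span K (v '' s)) := Module.finite_of_finite K
  calc s.ncard = (v '' s).ncard := hinj.ncard_image.symm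
    _ ≤ ((span K (v '' s) : Set V) \ {0}).ncard := by
      refine ncard_le_ncard ?_ (toFinite _)
      rintro - ⟨x, hx, rfl⟩
      exact ⟨subset_span ⟨x, hx, rfl⟩, h0 x hx⟩
    _ = Nat.card K ^ finrank K (span K (v '' s)) - 1 := by
      rw [ncard_sdiff_singleton_of_mem (zero_mem _), ← Module.natCard_eq_pow_finrank]
      rfl

variable (K v s) in
noncomputable def dualEvalOn : Module.Dual K V →ₗ[K] ι → K :=
  LinearMap.pi fun x => if x ∈ s then Module.Dual.eval K V (v x) else 0

variable (K v s) in
/-- The standard representation of the dual: the unit vectors `e_x` of `ι → K` modulo the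
evaluation vectors `(f (v x))_{x ∈ s}` of the functionals `f` on `V`. A linear relation among the
`e_x` with `x ∈ t` is then a functional vanishing on `v '' (s \ t)` but not on `v '' s`. -/
abbrev DualRepSpace := (ι → K) ⧸ LinearMap.range (dualEvalOn K v s)

variable (K v s) in
noncomputable def dualRep (x : ι) : DualRepSpace K v s := Submodule.mkQ _ (Pi.single x 1)

lemma linearCombination_dualRep :
    Finsupp.linearCombination K (dualRep K v s) =
      (LinearMap.range (dualEvalOn K v s)).mkQ ∘ₗ Finsupp.lcoeFun := by
  ext x
  simp [dualRep, Finsupp.single_eq_pi_single]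

lemma dualEvalOn_apply (f : Module.Dual K V) (x : ι) :
    dualEvalOn K v s f x = if x ∈ s then f (v x) else 0 := by
  simp only [dualEvalOn, LinearMap.pi_apply]
  split_ifs <;> simp

lemma linearIndepOn_dualRep_iff (hs : s.Finite) :
    LinearIndepOn K (dualRep K v s) t ↔ span K (v '' (s \ t)) = span K (v '' s) := by
  simp only [linearIndepOn_iff, linearCombination_dualRep, LinearMap.comp_apply, mkQ_apply,
    Quotient.mk_eq_zero, LinearMap.mem_range, Finsupp.lcoeFun_apply]
  constructor
  · intro h
    by_contra hne
    obtain ⟨x, hxs, hx⟩ : ∃ x ∈ s, v x ∉ span K (v '' (s \ t)) := by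
      by_contra! hall
      refine hne (le_antisymm (span_mono (image_mono sdiff_subset)) (span_le.mpr ?_))
      rintro - ⟨x, hx, rfl⟩
      exact hall x hx
    obtain ⟨f, hfx, hf⟩ := exists_dual_map_eq_bot_of_notMem hx inferInstance
    have hsupp : Function.support (dualEvalOn K v s f) ⊆ s ∩ t := by
      intro y hy
      rw [Function.mem_support, dualEvalOn_apply] at hy
      split_ifs at hy with hys
      · refine ⟨hys, by_contra fun hyt => hy ?_⟩
        exact LinearMap.le_ker_iff_map.mpr hf (subset_span ⟨y, ⟨hys, hyt⟩, rfl⟩)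
      · exact absurd rfl hy
    have := h (Finsupp.ofSupportFinite _ ((hs.inter_of_left t).subset hsupp))
      (fun y hy => (hsupp (Finsupp.mem_support_iff.mp hy)).2)
      ⟨f, Finsupp.ofSupportFinite_coe.symm⟩
    have hx0 : dualEvalOn K v s f x = 0 := DFunLike.congr_fun this x
    rw [dualEvalOn_apply, if_pos hxs] at hx0
    exact hfx hx0
  · intro heq l hl ⟨f, hf⟩
    have hker : span K (v '' s) ≤ LinearMap.ker f := by
      rw [← heq, span_le]
      rintro - ⟨y, ⟨hys, hyt⟩, rfl⟩
      have := congrArg (· y) hf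
      simp only [dualEvalOn_apply, hys, if_true] at this
      simpa [this] using Finsupp.notMem_support_iff.mp (fun h => hyt (hl h))
    ext y
    have hy := congrArg (· y) hf
    simp only [dualEvalOn_apply] at hy
    split_ifs at hy with hys
    · rw [Finsupp.coe_zero, Pi.zero_apply, ← hy]
      exact hker (subset_span ⟨y, hys, rfl⟩)
    · simp [← hy]

end LinearAlgebra

lemma mThreeConnected.mRk_add_ncard_le {α : Type*} {M : Matroid α} {X : Set α}
    (h : mThreeConnected M) (hX : X ⊆ M.E) (h1 : 1 ≤ X.ncard) (h2 : X.ncard ≤ 2)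
    (hc : X.ncard ≤ (M.E \ X).ncard) : mRk M M.E + X.ncard ≤ mRk M X + mRk M (M.E \ X) := by
  by_contra! hlt
  have hsep : mKSep M X.ncard X (M.E \ X) :=
    ⟨disjoint_sdiff_right, union_sdiff_cancel hX, le_rfl, hc, by omega⟩
  obtain hk | hk : X.ncard = 1 ∨ X.ncard = 2 := by omega
  · exact h.1 _ _ (hk ▸ hsep)
  · exact h.2 _ _ (hk ▸ hsep)

lemma matroidIso_map {α β : Type*} (M : Matroid α) (f : α → β) (hf : InjOn f M.E) :
    MatroidIso M (M.map f hf) := by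
  let e : M.E ≃ (M.map f hf).E := Equiv.Set.imageOfInjOn f M.E hf
  refine ⟨e, fun I => ?_⟩
  have himg : Subtype.val '' (e '' I) = f '' (Subtype.val '' I) := by
    simp only [image_image]
    rfl
  rw [himg, map_image_indep_iff (Subtype.coe_image_subset _ I)]

section BinaryRepresentation

variable {α W W' : Type*} [AddCommGroup W] [Module (ZMod 2) W] [AddCommGroup W']
  [Module (ZMod 2) W']  {M : Matroid α} {v : α → W} {w : α → W'} {I X : Set α}

lemma three_le_finrank_span_of_ncard_eq_seven (h7 : X.ncard = 7) (hinj : InjOn v X)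
    (h0 : ∀ x ∈ X, v x ≠ 0) : 3 ≤ finrank (ZMod 2) (span (ZMod 2) (v '' X)) := by
  have hcount := ncard_le_card_pow_finrank_sub_one (K := ZMod 2)
    (finite_of_ncard_ne_zero (by omega)) hinj h0
  rw [h7, Nat.card_zmod] at hcount
  exact (Nat.pow_le_pow_iff_right one_lt_two).mp (show 2 ^ 3 ≤ _ by omega)

namespace IsBinRepOn

lemma indep_iff {E : Set α} (hrep : IsBinRepOn M E v) (hI : I ⊆ E) :
    M.Indep I ↔ LinearIndepOn (ZMod 2) v I :=
  hrep.2 I hI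

lemma isBasis_iff (hrep : IsBinRepOn M M.E v) (hX : X ⊆ M.E) :
    M.IsBasis I X ↔ I ⊆ X ∧ LinearIndepOn (ZMod 2) v I ∧
      span (ZMod 2) (v '' I) = span (ZMod 2) (v '' X) := by
  constructor
  · intro hI
    have hli := (hrep.indep_iff (hI.subset.trans hX)).mp hI.indep
    refine ⟨hI.subset, hli, le_antisymm (span_mono (image_mono hI.subset)) (span_le.mpr ?_)⟩
    rintro - ⟨x, hx, rfl⟩
    by_cases hxI : x ∈ I
    · exact subset_span ⟨x, hxI, rfl⟩
    by_contra hv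
    refine (hI.insert_dep ⟨hx, hxI⟩).not_indep ((hrep.indep_iff ?_).mpr ?_)
    · exact insert_subset (hX hx) (hI.subset.trans hX)
    · exact (linearIndepOn_insert hxI).mpr ⟨hli, hv⟩
  · rintro ⟨hIX, hli, hspan⟩
    refine ((hrep.indep_iff (hIX.trans hX)).mpr hli).isBasis_of_forall_insert hIX
      fun x ⟨hx, hxI⟩ => ?_
    have hxIE : insert x I ⊆ M.E := insert_subset (hX hx) (hIX.trans hX)
    rw [Dep, and_iff_left hxIE, hrep.indep_iff hxIE, linearIndepOn_insert hxI, hspan]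
    exact fun h => h.2 (subset_span ⟨x, hx, rfl⟩)

lemma isBase_iff (hrep : IsBinRepOn M M.E v) {B : Set α} :
    M.IsBase B ↔ B ⊆ M.E ∧ LinearIndepOn (ZMod 2) v B ∧
      span (ZMod 2) (v '' B) = span (ZMod 2) (v '' M.E) := by
  rw [← isBasis_ground_iff, hrep.isBasis_iff subset_rfl]

lemma mRk_eq (hrep : IsBinRepOn M M.E v) (hX : X ⊆ M.E) (hXfin : X.Finite) :
    mRk M X = finrank (ZMod 2) (span (ZMod 2) (v '' X)) := by
  have : FiniteDimensional (ZMod 2) (span (ZMod 2) (v '' X)) :=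
    FiniteDimensional.span_of_finite _ (hXfin.image v)
  obtain ⟨I, hI⟩ := M.exists_isBasis X hX
  obtain ⟨hIX, hli, hspan⟩ := (hrep.isBasis_iff hX).mp hI
  refine IsGreatest.csSup_eq ⟨⟨I, ⟨hIX, hI.indep⟩, ?_⟩, ?_⟩
  · rw [← hspan, (linearIndepOn_iff_finrank_span_eq_ncard (hXfin.subset hIX)).mp hli]
  · rintro - ⟨J, ⟨hJX, hJ⟩, rfl⟩
    rw [← (linearIndepOn_iff_finrank_span_eq_ncard (hXfin.subset hJX)).mp
      ((hrep.indep_iff (hJX.trans hX)).mp hJ)]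
    exact finrank_mono (span_mono (image_mono hJX))

lemma dual_indep_iff (hrep : IsBinRepOn M M.E v) (hI : I ⊆ M.E) :
    M✶.Indep I ↔ span (ZMod 2) (v '' (M.E \ I)) = span (ZMod 2) (v '' M.E) := by
  rw [dual_indep_iff_exists', and_iff_right hI]
  constructor
  · rintro ⟨B, hB, hdisj⟩
    obtain ⟨hBE, -, hspan⟩ := hrep.isBase_iff.mp hB
    refine le_antisymm (span_mono (image_mono sdiff_subset)) (hspan ▸ span_mono (image_mono ?_))
    exact subset_sdiff.mpr ⟨hBE, hdisj.symm⟩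
  · intro h
    obtain ⟨B, hB⟩ := M.exists_isBasis (M.E \ I) sdiff_subset
    obtain ⟨hBI, hli, hspan⟩ := (hrep.isBasis_iff sdiff_subset).mp hB
    exact ⟨B, hrep.isBase_iff.mpr ⟨hBI.trans sdiff_subset, hli, hspan.trans h⟩,
      disjoint_of_subset_right hBI disjoint_sdiff_right⟩

lemma dual (hrep : IsBinRepOn M M.E v) (hfin : M.E.Finite) :
    IsBinRepOn M✶ M.E (dualRep (ZMod 2) v M.E) :=
  ⟨rfl, fun _ hI => (hrep.dual_indep_iff hI).trans (linearIndepOn_dualRep_iff hfin).symm⟩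

lemma finrank_span_eq_ncard_of_isBase (hrep : IsBinRepOn M M.E v) (hfin : M.E.Finite)
    {B : Set α} (hB : M.IsBase B) : finrank (ZMod 2) (span (ZMod 2) (v '' M.E)) = B.ncard := by
  obtain ⟨hBE, hli, hspan⟩ := hrep.isBase_iff.mp hB
  rw [← hspan]
  exact (linearIndepOn_iff_finrank_span_eq_ncard (hfin.subset hBE)).mp hli

lemma finrank_add_finrank_dual (hrep : IsBinRepOn M M.E v) (hrep' : IsBinRepOn M✶ M.E w)
    (hfin : M.E.Finite) :
    finrank (ZMod 2) (span (ZMod 2) (v '' M.E)) + finrank (ZMod 2) (span (ZMod 2) (w '' M.E)) =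
      M.E.ncard := by
  obtain ⟨B, hB⟩ := M.exists_isBase
  have hdual : finrank (ZMod 2) (span (ZMod 2) (w '' M.E)) = (M.E \ B).ncard :=
    hrep'.finrank_span_eq_ncard_of_isBase hfin hB.compl_isBase_dual
  rw [hrep.finrank_span_eq_ncard_of_isBase hfin hB, hdual, add_comm,
    ncard_sdiff_add_ncard_of_subset hB.subset_ground hfin]

lemma injOn_and_ne_zero (hrep : IsBinRepOn M M.E v)
    (hpair : ∀ x ∈ M.E, ∀ y ∈ M.E, M.Indep {x, y}) :
    InjOn v M.E ∧ ∀ x ∈ M.E, v x ≠ 0 := by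
  have hli : ∀ x ∈ M.E, ∀ y ∈ M.E, LinearIndepOn (ZMod 2) v {x, y} := fun x hx y hy =>
    (hrep.indep_iff (pair_subset hx hy)).mp (hpair x hx y hy)
  exact ⟨fun x hx y hy hxy =>
    (hli x hx y hy).injOn (mem_insert _ _) (mem_insert_of_mem _ rfl) hxy,
    fun x hx => (hli x hx x hx).ne_zero (mem_insert _ _)⟩

lemma indep_and_coindep_of_threeConnected (hrep : IsBinRepOn M M.E v)
    (h3 : mThreeConnected M) (hfin : M.E.Finite) (hE : 4 ≤ M.E.ncard) (hX : X ⊆ M.E)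
    (hX2 : X.ncard ≤ 2) : M.Indep X ∧ M✶.Indep X := by
  rcases X.eq_empty_or_nonempty with rfl | hne
  · exact ⟨M.empty_indep, M✶.empty_indep⟩
  have : FiniteDimensional (ZMod 2) (span (ZMod 2) (v '' M.E)) :=
    FiniteDimensional.span_of_finite _ (hfin.image v)
  have hXfin := hfin.subset hX
  have hsep := h3.mRk_add_ncard_le hX ((ncard_pos hXfin).mpr hne) hX2
    (by rw [ncard_sdiff hX hXfin]; omega)
  rw [hrep.mRk_eq subset_rfl hfin, hrep.mRk_eq hX hXfin,
    hrep.mRk_eq sdiff_subset hfin.sdiff] at hsep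
  have hXr := finrank_span_image_le_ncard (K := ZMod 2) (v := v) hXfin
  have hspan_le : span (ZMod 2) (v '' (M.E \ X)) ≤ span (ZMod 2) (v '' M.E) :=
    span_mono (image_mono sdiff_subset)
  have hEr := Submodule.finrank_mono hspan_le
  rw [hrep.indep_iff hX, linearIndepOn_iff_finrank_span_eq_ncard hXfin, hrep.dual_indep_iff hX]
  exact ⟨by omega, eq_of_le_of_finrank_eq hspan_le (by omega)⟩

lemma exists_map_eq_fano (hrep : IsBinRepOn M M.E v) (h7 : M.E.ncard = 7)
    (hinj : InjOn v M.E) (h0 : ∀ x ∈ M.E, v x ≠ 0)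
    (hr : finrank (ZMod 2) (span (ZMod 2) (v '' M.E)) = 3)
    {F : Matroid (PGpt 3)} (hF : IsBinRepOn F univ Subtype.val) :
    ∃ (p : α → PGpt 3) (hp : InjOn p M.E), M.map p hp = F := by
  set U := span (ZMod 2) (v '' M.E)
  have : Module.Finite (ZMod 2) U := Module.finite_of_finrank_pos (by omega)
  let L : U ≃ₗ[ZMod 2] (Fin 3 → ZMod 2) := LinearEquiv.ofFinrankEq _ _ (by simp [hr])
  obtain ⟨T, hT⟩ := LinearMap.exists_extend (L : U →ₗ[ZMod 2] Fin 3 → ZMod 2)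
  have hTinj : InjOn T U := fun a ha b hb hab => by
    have hL : ∀ u : U, L u = T u := fun u => (LinearMap.congr_fun hT u).symm
    exact Subtype.ext_iff.mp
      (L.injective ((hL ⟨a, ha⟩).trans (hab.trans (hL ⟨b, hb⟩).symm)))
  have hTv : ∀ x ∈ M.E, T (v x) ≠ 0 := fun x hx h =>
    h0 x hx (hTinj (subset_span ⟨x, hx, rfl⟩) (zero_mem U) (h.trans (map_zero T).symm))
  let p : α → PGpt 3 := fun x =>
    if h : T (v x) = 0 then ⟨1, one_ne_zero⟩ else ⟨T (v x), h⟩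
  have hp : ∀ x ∈ M.E, (p x : Fin 3 → ZMod 2) = T (v x) := fun x hx => by simp [p, hTv x hx]
  have hpinj : InjOn p M.E := fun x hx y hy hxy => hinj hx hy
    (hTinj (subset_span ⟨x, hx, rfl⟩) (subset_span ⟨y, hy, rfl⟩)
      (by rw [← hp x hx, ← hp y hy, hxy]))
  refine ⟨p, hpinj, ext_indep ?_ fun I hI => ?_⟩
  · rw [map_ground, hF.1]
    refine eq_of_subset_of_ncard_le (subset_univ _) ?_ (toFinite _)
    simp [hpinj.ncard_image, h7, Nat.card_eq_fintype_card, Fintype.card_subtype_compl]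
  obtain ⟨I₀, hI₀, rfl⟩ := subset_image_iff.mp hI
  rw [map_image_indep_iff hI₀, hrep.indep_iff hI₀, hF.indep_iff (subset_univ _),
    ← T.linearIndepOn_iff_of_injOn (hTinj.mono (span_mono (image_mono hI₀))),
    linearIndepOn_congr (v := T ∘ v) (w := Subtype.val ∘ p) fun x hx => (hp x (hI₀ hx)).symm]
  exact ⟨fun h => h.image_of_comp _ _, fun h => h.comp_of_image (hpinj.mono hI₀)⟩

end IsBinRepOn

end BinaryRepresentation

/-- Every internally 4-connected binary matroid with exactly 7 elements is isomorphic to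
the Fano matroid `F_7` or its dual. -/
theorem statement15 {α : Type*} (M : Matroid α) (hb : mBinary M) (h7 : M.E.ncard = 7)
    (h4 : mInternally4 M)
    (F : Matroid (PGpt 3)) (hF : IsBinRepOn F univ Subtype.val) :
    MatroidIso M F ∨ MatroidIso M F✶ := by
  obtain ⟨n, v, hrep⟩ := hb
  have hfin : M.E.Finite := finite_of_ncard_ne_zero (by omega)
  have hrep' := hrep.dual hfin
  have hpair : ∀ x ∈ M.E, ∀ y ∈ M.E, M.Indep {x, y} ∧ M✶.Indep {x, y} :=
    fun x hx y hy => hrep.indep_and_coindep_of_threeConnected h4.1 hfin (by omega)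
      (pair_subset hx hy) ((ncard_insert_le x {y}).trans (by simp))
  obtain ⟨hinj, h0⟩ := hrep.injOn_and_ne_zero fun x hx y hy => (hpair x hx y hy).1
  obtain ⟨hinj', h0'⟩ := hrep'.injOn_and_ne_zero fun x hx y hy => (hpair x hx y hy).2
  have hsum := hrep.finrank_add_finrank_dual hrep' hfin
  have hr3 := three_le_finrank_span_of_ncard_eq_seven h7 hinj h0
  have hr3' := three_le_finrank_span_of_ncard_eq_seven h7 hinj' h0'
  obtain hr | hr : finrank (ZMod 2) (span (ZMod 2) (v '' M.E)) = 3 ∨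
      finrank (ZMod 2) (span (ZMod 2) (dualRep (ZMod 2) v M.E '' M.E)) = 3 := by
    omega
  · obtain ⟨p, hp, rfl⟩ := hrep.exists_map_eq_fano h7 hinj h0 hr hF
    exact Or.inl (matroidIso_map M p hp)
  · obtain ⟨p, hp, rfl⟩ := hrep'.exists_map_eq_fano h7 hinj' h0' hr hF
    have hdual : (M✶.map p hp)✶ = M.map p hp := by simp only [map_dual, dual_dual]
    exact Or.inr (hdual ▸ matroidIso_map M p hp)
end
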